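/- arXiv:1111.4196 — 2 statements merged into one kernel-verified Lean document; each statement's English description precedes it below -/
import Mathlib

section
/- Let N ≥ 1 and d, u, a ∈ ℕ with d ≥ 1, a ≥ 1, d + u + a = N. Define L(p) = Σ_{k=d}^{d+u} C(N,k) p^k (1-p)^{N-k}. Then L attains its maximum on [0,1] at the unique point p* ∈ (0,1) satisfying p* = (1 + ((a(a+1)⋯(a+u))/(d(d+1)⋯(d+u)))^{1/(u+1)})^{-1}. -/
open Finset
open Nat

lemma my_prod_eq_asc (x u : ℕ) : ∏ i ∈ range (u+1), (x+i) = x.ascFactorial (u+1) := by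
  induction u with
  | zero => simp [Nat.ascFactorial]
  | succ n ih => rw [prod_range_succ, ih, mul_comm]; rfl

lemma my_key_nat (N d u a : ℕ) (hsum : d + u + a = N) (hd : 1 ≤ d) (ha : 1 ≤ a) :
    (N-1).choose (d+u) * ∏ i ∈ range (u+1), (d+i)
      = (N-1).choose (d-1) * ∏ i ∈ range (u+1), (a+i) := by
  have hPd : (d-1)! * ∏ i ∈ range (u+1), (d+i) = (d+u)! := by
    rw [my_prod_eq_asc, Nat.factorial_mul_ascFactorial' d (u+1) hd]
    congr 1
  have hPa : (a-1)! * ∏ i ∈ range (u+1), (a+i) = (a+u)! := by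
    rw [my_prod_eq_asc, Nat.factorial_mul_ascFactorial' a (u+1) ha]
    congr 1
  have h1 : (N-1).choose (d+u) * (d+u)! * (a-1)! = (N-1)! := by
    have h := Nat.choose_mul_factorial_mul_factorial (n := N-1) (k := d+u) (by omega)
    have e : N - 1 - (d+u) = a - 1 := by omega
    rwa [e] at h
  have h2 : (N-1).choose (d-1) * (d-1)! * (a+u)! = (N-1)! := by
    have h := Nat.choose_mul_factorial_mul_factorial (n := N-1) (k := d-1) (by omega)
    have e : N - 1 - (d-1) = a + u := by omega
    rwa [e] at h
  apply Nat.eq_of_mul_eq_mul_right (Nat.mul_pos (Nat.factorial_pos (d-1)) (Nat.factorial_pos (a-1)))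
  calc (N-1).choose (d+u) * (∏ i ∈ range (u+1), (d+i)) * ((d-1)! * (a-1)!)
      = (N-1).choose (d+u) * ((d-1)! * ∏ i ∈ range (u+1), (d+i)) * (a-1)! := by ring
    _ = (N-1)! := by rw [hPd, h1]
    _ = (N-1).choose (d-1) * ((a-1)! * ∏ i ∈ range (u+1), (a+i)) * (d-1)! := by
          rw [hPa, ← h2]; ring
    _ = (N-1).choose (d-1) * (∏ i ∈ range (u+1), (a+i)) * ((d-1)! * (a-1)!) := by ring

/-- Observed-range binomial likelihood. -/
noncomputable def obsL (N d u : ℕ) (p : ℝ) : ℝ :=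
  ∑ k ∈ Finset.Icc d (d + u), (N.choose k : ℝ) * p ^ k * (1 - p) ^ (N - k)

lemma my_A (N k : ℕ) (h1 : 1 ≤ k) (h2 : k ≤ N) :
    k * N.choose k = N * (N-1).choose (k-1) := by
  have := Nat.add_one_mul_choose_eq (N-1) (k-1)
  have eN : N - 1 + 1 = N := by omega
  have ek : k - 1 + 1 = k := by omega
  rw [eN, ek] at this
  rw [this, mul_comm]

lemma my_B (N k : ℕ) (h2 : k ≤ N - 1) (hN : 1 ≤ N) :
    (N - k) * N.choose k = N * (N-1).choose k := by
  have hkN : k ≤ N := by omega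
  rw [← Nat.choose_symm hkN, my_A N (N-k) (by omega) (by omega)]
  congr 1
  have e1 : N - k - 1 = N - 1 - k := by omega
  rw [e1, Nat.choose_symm (by omega)]

lemma my_hasDeriv (N d u a : ℕ) (hsum : d + u + a = N) (hd : 1 ≤ d) (ha : 1 ≤ a) (p : ℝ) :
    HasDerivAt (obsL N d u)
      ((N : ℝ) * ((N-1).choose (d-1)) * p^(d-1) * (1-p)^(u+a)
        - (N : ℝ) * ((N-1).choose (d+u)) * p^(d+u) * (1-p)^(a-1)) p := by
  set T : ℕ → ℝ := fun k => (N:ℝ) * ((N-1).choose (k-1)) * p^(k-1) * (1-p)^(N-k) with hT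
  have hterm : ∀ k ∈ Finset.Icc d (d+u), HasDerivAt
      (fun q : ℝ => (N.choose k : ℝ) * q ^ k * (1-q) ^ (N-k)) (T k - T (k+1)) p := by
    intro k hk
    simp only [Finset.mem_Icc] at hk
    have hk1 : 1 ≤ k := le_trans hd hk.1
    have hkN : k + 1 ≤ N := by omega
    have h1 : HasDerivAt (fun q : ℝ => (1 - q)) (-1) p := by
      simpa using (hasDerivAt_id p).const_sub (1:ℝ)
    have h2 := h1.pow (N - k)
    have h3 := (hasDerivAt_pow k p).mul h2
    have h4 := h3.const_mul ((N.choose k : ℝ))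
    have h5 : HasDerivAt (fun q : ℝ => (N.choose k : ℝ) * q ^ k * (1-q) ^ (N-k))
        ((N.choose k : ℝ) * ((k : ℝ) * p ^ (k-1) * (1-p)^(N-k)
          + p ^ k * ((N-k : ℕ) * (1-p)^(N-k-1) * (-1)))) p := by
      apply h4.congr_of_eventuallyEq
      filter_upwards with q; simp only [Pi.mul_apply, Pi.pow_apply]; ring
    convert h5 using 1
    have hA : ((k : ℝ)) * (N.choose k : ℝ) = (N : ℝ) * ((N-1).choose (k-1) : ℝ) := by
      exact_mod_cast my_A N k hk1 (by omega)
    have hB : ((N - k : ℕ) : ℝ) * (N.choose k : ℝ) = (N : ℝ) * ((N-1).choose k : ℝ) := by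
      exact_mod_cast my_B N k (by omega) (by omega)
    have e1 : k + 1 - 1 = k := by omega
    have e2 : N - (k+1) = N - k - 1 := by omega
    simp only [hT, e1, e2]
    calc (N:ℝ) * ((N-1).choose (k-1)) * p^(k-1) * (1-p)^(N-k)
          - (N:ℝ) * ((N-1).choose k) * p^k * (1-p)^(N-k-1)
        = ((k:ℝ) * (N.choose k : ℝ)) * p^(k-1) * (1-p)^(N-k)
          - (((N-k:ℕ):ℝ) * (N.choose k : ℝ)) * p^k * (1-p)^(N-k-1) := by rw [hA, hB]
      _ = (N.choose k : ℝ) * ((k : ℝ) * p ^ (k-1) * (1-p)^(N-k)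
          + p ^ k * ((N-k : ℕ) * (1-p)^(N-k-1) * (-1))) := by ring
  have hs := HasDerivAt.fun_sum hterm
  have htel : ∑ k ∈ Finset.Icc d (d+u), (T k - T (k+1)) = T d - T (d+u+1) := by
    have hIcc : Finset.Icc d (d+u) = Finset.Ico d (d+u+1) := by
      rw [Finset.Ico_add_one_right_eq_Icc]
    rw [hIcc, Finset.sum_Ico_eq_sum_range]
    have e : d + u + 1 - d = u + 1 := by omega
    rw [e]
    have := Finset.sum_range_sub' (f := fun i => T (d+i)) (n := u+1)
    simpa [add_assoc] using this
  rw [htel] at hs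
  have eTd : T d = (N : ℝ) * ((N-1).choose (d-1)) * p^(d-1) * (1-p)^(u+a) := by
    simp only [hT]
    congr 2
    omega
  have eTe : T (d+u+1) = (N : ℝ) * ((N-1).choose (d+u)) * p^(d+u) * (1-p)^(a-1) := by
    simp only [hT]
    have e1 : d + u + 1 - 1 = d + u := by omega
    have e2 : N - (d+u+1) = a - 1 := by omega
    rw [e1, e2]
  rw [eTd, eTe] at hs
  exact hs

/-- The product a(a+1)⋯(a+u), as a real number. -/
def prodR (a u : ℕ) : ℝ := ∏ i ∈ Finset.range (u + 1), ((a + i : ℕ) : ℝ)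

/-- The observed-range MLE formula in the non-degenerate case. -/
noncomputable def pstar (d a u : ℕ) : ℝ :=
  (1 + (prodR a u / prodR d u) ^ ((1 : ℝ) / (u + 1)))⁻¹

theorem stmt4 (N d u a : ℕ) (hN : 1 ≤ N) (hsum : d + u + a = N)
    (hd : 1 ≤ d) (ha : 1 ≤ a) :
    pstar d a u ∈ Set.Ioo (0:ℝ) 1 ∧
      IsMaxOn (obsL N d u) (Set.Icc (0:ℝ) 1) (pstar d a u) ∧
      ∀ q ∈ Set.Icc (0:ℝ) 1, obsL N d u q = obsL N d u (pstar d a u) → q = pstar d a u := by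
  set c1 : ℝ := ((N-1).choose (d-1) : ℝ) with hc1def
  set c2 : ℝ := ((N-1).choose (d+u) : ℝ) with hc2def
  have hPd : 0 < prodR d u := by
    apply Finset.prod_pos; intro i _; positivity
  have hPa : 0 < prodR a u := by
    apply Finset.prod_pos; intro i _; positivity
  set r : ℝ := prodR a u / prodR d u with hrdef
  have hr : 0 < r := div_pos hPa hPd
  set s : ℝ := r ^ ((1 : ℝ) / (u + 1)) with hsdef
  have hs0 : 0 < s := Real.rpow_pos_of_pos hr _
  have hpstar : pstar d a u = (1 + s)⁻¹ := rfl
  have hp0 : 0 < pstar d a u := by rw [hpstar]; positivity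
  have hp1 : pstar d a u < 1 := by
    rw [hpstar]
    rw [inv_lt_one_iff₀]
    right; linarith
  have hsu : s ^ (u + 1) = r := by
    rw [hsdef, ← Real.rpow_natCast (r ^ ((1:ℝ)/(u+1))) (u+1), ← Real.rpow_mul hr.le]
    have : (1 : ℝ) / (u + 1) * ((u + 1 : ℕ) : ℝ) = 1 := by
      push_cast
      field_simp
    rw [this, Real.rpow_one]
  have hc2r : c2 = c1 * r := by
    have h := my_key_nat N d u a hsum hd ha
    have h2 := congrArg (Nat.cast : ℕ → ℝ) h
    push_cast at h2
    have hPde : prodR d u = ∏ i ∈ range (u+1), ((d : ℝ) + i) := by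
      simp [prodR]
    have hPae : prodR a u = ∏ i ∈ range (u+1), ((a : ℝ) + i) := by
      simp [prodR]
    rw [hrdef, hPde, hPae, hc2def, hc1def]
    rw [mul_div_assoc', eq_div_iff (by rw [← hPde]; exact hPd.ne')]
    push_cast
    linarith [h2]
  -- factorized derivative
  set g : ℝ → ℝ := fun p => (1-p)^(u+1) - r * p^(u+1) with hgdef
  have hfact : ∀ p : ℝ,
      (N : ℝ) * c1 * p^(d-1) * (1-p)^(u+a) - (N : ℝ) * c2 * p^(d+u) * (1-p)^(a-1)
      = (N : ℝ) * c1 * p^(d-1) * (1-p)^(a-1) * g p := by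
    intro p
    have e1 : u + a = (a-1) + (u+1) := by omega
    have e2 : d + u = (d-1) + (u+1) := by omega
    rw [e1, e2, pow_add, pow_add, hc2r, hgdef]
    ring
  have hganti : StrictAntiOn g (Set.Icc (0:ℝ) 1) := by
    intro x hx y hy hxy
    simp only [Set.mem_Icc] at hx hy
    have h1 : (1-y)^(u+1) < (1-x)^(u+1) := by
      apply pow_lt_pow_left₀ (by linarith) (by linarith)
      omega
    have h2 : r * x^(u+1) ≤ r * y^(u+1) := by
      apply mul_le_mul_of_nonneg_left _ hr.le
      exact pow_le_pow_left₀ hx.1 hxy.le _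
    simp only [hgdef]
    linarith
  have hgp : g (pstar d a u) = 0 := by
    have h1 : 1 - pstar d a u = s * pstar d a u := by
      rw [hpstar]
      field_simp
      ring
    simp only [hgdef]
    rw [h1, mul_pow, hsu]
    ring
  have hc1pos : 0 < c1 := by
    rw [hc1def]
    exact_mod_cast Nat.choose_pos (by omega : d - 1 ≤ N - 1)
  have hderiv : ∀ p : ℝ, HasDerivAt (obsL N d u)
      ((N : ℝ) * c1 * p^(d-1) * (1-p)^(a-1) * g p) p := by
    intro p
    have h := my_hasDeriv N d u a hsum hd ha p
    rw [hfact p] at h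
    exact h
  have hcont : Continuous (obsL N d u) :=
    Differentiable.continuous (fun p => (hderiv p).differentiableAt)
  have hmono : StrictMonoOn (obsL N d u) (Set.Icc 0 (pstar d a u)) := by
    apply strictMonoOn_of_deriv_pos (convex_Icc _ _) hcont.continuousOn
    intro x hx
    rw [interior_Icc] at hx
    obtain ⟨hx0, hxp⟩ := hx
    rw [(hderiv x).deriv]
    have hx1 : x < 1 := lt_trans hxp hp1
    have hgx : 0 < g x := by
      have := hganti ⟨hx0.le, hx1.le⟩ ⟨hp0.le, hp1.le⟩ hxp
      rw [hgp] at this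
      linarith
    have hNpos : (0:ℝ) < N := by exact_mod_cast hN
    have h1x : (0:ℝ) < 1 - x := by linarith
    exact mul_pos (mul_pos (mul_pos (mul_pos hNpos hc1pos) (pow_pos hx0 _)) (pow_pos h1x _)) hgx
  have hanti : StrictAntiOn (obsL N d u) (Set.Icc (pstar d a u) 1) := by
    apply strictAntiOn_of_deriv_neg (convex_Icc _ _) hcont.continuousOn
    intro x hx
    rw [interior_Icc] at hx
    obtain ⟨hxp, hx1⟩ := hx
    rw [(hderiv x).deriv]
    have hx0 : 0 < x := lt_trans hp0 hxp
    have hgx : g x < 0 := by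
      have := hganti ⟨hp0.le, hp1.le⟩ ⟨hx0.le, hx1.le⟩ hxp
      rw [hgp] at this
      linarith
    have hNpos : (0:ℝ) < N := by exact_mod_cast hN
    have h1x : (0:ℝ) < 1 - x := by linarith
    have hpre : 0 < (N : ℝ) * c1 * x^(d-1) * (1-x)^(a-1) :=
      mul_pos (mul_pos (mul_pos hNpos hc1pos) (pow_pos hx0 _)) (pow_pos h1x _)
    exact mul_neg_of_pos_of_neg hpre hgx
  refine ⟨⟨hp0, hp1⟩, ?_, ?_⟩
  · rw [isMaxOn_iff]
    intro x hx
    obtain ⟨hx0, hx1⟩ := hx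
    rcases le_total x (pstar d a u) with h | h
    · exact hmono.monotoneOn ⟨hx0, h⟩ ⟨hp0.le, le_refl _⟩ h
    · exact hanti.antitoneOn ⟨le_refl _, hp1.le⟩ ⟨h, hx1⟩ h
  · intro q hq heq
    obtain ⟨hq0, hq1⟩ := hq
    by_contra hne
    rcases lt_or_gt_of_ne hne with h | h
    · have := hmono ⟨hq0, h.le⟩ ⟨hp0.le, le_refl _⟩ h
      rw [heq] at this
      exact lt_irrefl _ this
    · have := hanti ⟨le_refl _, hp1.le⟩ ⟨h.le, hq1⟩ h
      rw [heq] at this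
      exact lt_irrefl _ this
end

section
/- Define F̂(d,a,u) by: F̂ = 0 if d = 0 and a ≥ 1; F̂ = 1 if a = 0 and d ≥ 1; F̂ = 1/2 if u = N; and F̂ = (1 + ((a(a+1)⋯(a+u))/(d(d+1)⋯(d+u)))^{1/(u+1)})^{-1} otherwise, where N = d+u+a is fixed. If (d,a,u) and (d',a',u') satisfy d ≤ d', a ≥ a', d+a+u = d'+a'+u' = N, then F̂(d,a,u) ≤ F̂(d',a',u'). Consequently the estimator τ ↦ F̂(d_τ, a_τ, u_τ) is nondecreasing in τ. -/
open Finset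

/-- The observed-range maximum likelihood estimator of F(τ), as a function of the
counts d, a, u with d + a + u = N. -/
noncomputable def Fhat (N d a u : ℕ) : ℝ :=
  if d = 0 ∧ 1 ≤ a then 0
  else if a = 0 ∧ 1 ≤ d then 1
  else if u = N then 1 / 2
  else (1 + (prodR a u / prodR d u) ^ ((1 : ℝ) / (u + 1)))⁻¹

open Classical in
noncomputable def dCount {N : ℕ} (obs : Fin N → ℝ ⊕ ℝ × ℝ) (τ : ℝ) : ℕ :=
  (Finset.univ.filter fun n => match obs n with
    | Sum.inl x => x ≤ τ
    | Sum.inr c => c.2 ≤ τ).card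

open Classical in
noncomputable def aCount {N : ℕ} (obs : Fin N → ℝ ⊕ ℝ × ℝ) (τ : ℝ) : ℕ :=
  (Finset.univ.filter fun n => match obs n with
    | Sum.inl x => τ < x
    | Sum.inr c => τ ≤ c.1).card

lemma prodR_nonneg (a u : ℕ) : 0 ≤ prodR a u :=
  Finset.prod_nonneg fun i _ => by positivity

lemma prodR_pos (a u : ℕ) (ha : 1 ≤ a) : 0 < prodR a u :=
  Finset.prod_pos fun i _ => by
    have : 0 < a + i := by omega
    exact_mod_cast this

lemma prodR_succ (a u : ℕ) : prodR a (u+1) = prodR a u * ((a + (u+1) : ℕ) : ℝ) := by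
  unfold prodR; rw [Finset.prod_range_succ]

lemma prodR_le (a u b : ℕ) (hb : a + u ≤ b) : prodR a u ≤ (b:ℝ)^(u+1) := by
  calc prodR a u ≤ ∏ _i ∈ Finset.range (u+1), (b:ℝ) := by
        apply Finset.prod_le_prod
        · intro i _; positivity
        · intro i hi
          have : a + i ≤ b := by simp [Finset.mem_range] at hi; omega
          exact_mod_cast this
    _ = (b:ℝ)^(u+1) := by rw [Finset.prod_const, Finset.card_range]

lemma pow_le_prodR (a u c : ℕ) (hc : c ≤ a) : (c:ℝ)^(u+1) ≤ prodR a u := by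
  calc (c:ℝ)^(u+1) = ∏ _i ∈ Finset.range (u+1), (c:ℝ) := by
        rw [Finset.prod_const, Finset.card_range]
    _ ≤ prodR a u := by
        apply Finset.prod_le_prod
        · intro i _; positivity
        · intro i _
          have : c ≤ a + i := by omega
          exact_mod_cast this

lemma prodR_shift (a u : ℕ) : prodR a (u+1) = (a : ℝ) * prodR (a+1) u := by
  unfold prodR
  rw [Finset.prod_range_succ', mul_comm]
  have h1 : ((a + 0 : ℕ) : ℝ) = (a:ℝ) := by norm_num
  rw [h1]
  congr 1
  exact Finset.prod_congr rfl fun i _ => by norm_cast; omega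

lemma rpow_le_of_pow_le (A B : ℝ) (hA : 0 ≤ A) (hB : 0 ≤ B) (m n : ℕ)
    (hm : 1 ≤ m) (hn : 1 ≤ n) (h : A ^ n ≤ B ^ m) :
    A ^ ((1:ℝ)/m) ≤ B ^ ((1:ℝ)/n) := by
  have hm' : (m:ℝ) ≠ 0 := by exact_mod_cast Nat.one_le_iff_ne_zero.mp hm
  have hn' : (n:ℝ) ≠ 0 := by exact_mod_cast Nat.one_le_iff_ne_zero.mp hn
  have e1 : A ^ ((1:ℝ)/m) = (A ^ n) ^ ((1:ℝ)/(m*n)) := by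
    rw [← Real.rpow_natCast A n, ← Real.rpow_mul hA]
    congr 1
    field_simp
  have e2 : B ^ ((1:ℝ)/n) = (B ^ m) ^ ((1:ℝ)/(m*n)) := by
    rw [← Real.rpow_natCast B m, ← Real.rpow_mul hB]
    congr 1
    field_simp
  rw [e1, e2]
  exact Real.rpow_le_rpow (pow_nonneg hA n) h (by positivity)

noncomputable def G (d a u : ℕ) : ℝ := (prodR a u / prodR d u) ^ ((1 : ℝ) / (u + 1))

lemma G_cast (d a u : ℕ) : G d a u = (prodR a u / prodR d u) ^ ((1:ℝ)/((u+1 : ℕ) : ℝ)) := by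
  unfold G; push_cast; ring_nf

lemma step_d (d a u : ℕ) (hd : 1 ≤ d) (ha : 1 ≤ a) : G (d+1) a u ≤ G d a (u+1) := by
  rw [G_cast, G_cast]
  apply rpow_le_of_pow_le _ _ (div_nonneg (prodR_nonneg _ _) (prodR_nonneg _ _)) (div_nonneg (prodR_nonneg _ _) (prodR_nonneg _ _)) (u+1) (u+1+1)
      (by omega) (by omega)
  have hQ : 0 < prodR (d+1) u := prodR_pos _ _ (by omega)
  have hD : 0 < prodR d (u+1) := prodR_pos _ _ hd
  rw [div_pow, div_pow, div_le_div_iff₀ (by positivity) (by positivity)]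
  have hPa : 0 ≤ prodR a u := prodR_nonneg a u
  have key : prodR a u * (d:ℝ)^(u+1) ≤ ((a+(u+1):ℕ):ℝ)^(u+1) * prodR (d+1) u := by
    have h1 : prodR a u ≤ ((a+(u+1):ℕ):ℝ)^(u+1) := prodR_le a u (a+(u+1)) (by omega)
    have h2 : (d:ℝ)^(u+1) ≤ prodR (d+1) u := pow_le_prodR (d+1) u d (by omega)
    exact mul_le_mul h1 h2 (by positivity) (le_trans hPa h1)
  calc prodR a u ^ (u+1+1) * prodR d (u+1) ^ (u+1)
      = (prodR a u ^ (u+1) * prodR (d+1) u ^ (u+1)) * (prodR a u * (d:ℝ)^(u+1)) := by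
        rw [prodR_shift d u]; ring
    _ ≤ (prodR a u ^ (u+1) * prodR (d+1) u ^ (u+1)) *
        (((a+(u+1):ℕ):ℝ)^(u+1) * prodR (d+1) u) := by
        apply mul_le_mul_of_nonneg_left key (by positivity)
    _ = prodR a (u+1) ^ (u+1) * prodR (d+1) u ^ (u+1+1) := by
        rw [prodR_succ a u]; ring

lemma step_a (d a u : ℕ) (hd : 1 ≤ d) (ha : 1 ≤ a) : G d a (u+1) ≤ G d (a+1) u := by
  rw [G_cast, G_cast]
  apply rpow_le_of_pow_le _ _ (div_nonneg (prodR_nonneg _ _) (prodR_nonneg _ _)) (div_nonneg (prodR_nonneg _ _) (prodR_nonneg _ _)) (u+1+1) (u+1)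
      (by omega) (by omega)
  have hR : 0 < prodR (a+1) u := prodR_pos _ _ (by omega)
  have hD : 0 < prodR d u := prodR_pos _ _ hd
  have hD1 : 0 < prodR d (u+1) := prodR_pos _ _ hd
  rw [div_pow, div_pow, div_le_div_iff₀ (by positivity) (by positivity)]
  have key : (a:ℝ)^(u+1) * prodR d u ≤ prodR (a+1) u * ((d+(u+1):ℕ):ℝ)^(u+1) := by
    have h1 : (a:ℝ)^(u+1) ≤ prodR (a+1) u := pow_le_prodR (a+1) u a (by omega)
    have h2 : prodR d u ≤ ((d+(u+1):ℕ):ℝ)^(u+1) := prodR_le d u (d+(u+1)) (by omega)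
    exact mul_le_mul h1 h2 (le_of_lt hD) (le_of_lt hR)
  calc prodR a (u+1) ^ (u+1) * prodR d u ^ (u+1+1)
      = (prodR (a+1) u ^ (u+1) * prodR d u ^ (u+1)) * ((a:ℝ)^(u+1) * prodR d u) := by
        rw [prodR_shift a u]; ring
    _ ≤ (prodR (a+1) u ^ (u+1) * prodR d u ^ (u+1)) *
        (prodR (a+1) u * ((d+(u+1):ℕ):ℝ)^(u+1)) := by
        apply mul_le_mul_of_nonneg_left key (by positivity)
    _ = prodR (a+1) u ^ (u+1+1) * prodR d (u+1) ^ (u+1) := by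
        rw [prodR_succ d u]; ring

lemma chain_d (d a : ℕ) (hd : 1 ≤ d) (ha : 1 ≤ a) :
    ∀ k u, G (d+k) a u ≤ G d a (u+k) := by
  intro k
  induction k with
  | zero => intro u; simp
  | succ n ih =>
    intro u
    calc G (d+(n+1)) a u = G (d+n+1) a u := by ring_nf
      _ ≤ G (d+n) a (u+1) := step_d (d+n) a u (by omega) ha
      _ ≤ G d a (u+1+n) := ih (u+1)
      _ = G d a (u+(n+1)) := by ring_nf

lemma chain_a (d a : ℕ) (hd : 1 ≤ d) (ha : 1 ≤ a) :
    ∀ k u, G d a (u+k) ≤ G d (a+k) u := by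
  intro k
  induction k with
  | zero => intro u; simp
  | succ n ih =>
    intro u
    calc G d a (u+(n+1)) = G d a ((u+1)+n) := by ring_nf
      _ ≤ G d (a+n) (u+1) := ih (u+1)
      _ ≤ G d (a+n+1) u := step_a d (a+n) u hd (by omega)
      _ = G d (a+(n+1)) u := by ring_nf

lemma G_mono (d a u d' a' u' : ℕ) (hd : 1 ≤ d) (ha' : 1 ≤ a')
    (hdd : d ≤ d') (haa : a' ≤ a) (hsum : d + a + u = d' + a' + u') :
    G d' a' u' ≤ G d a u := by
  obtain ⟨k1, rfl⟩ := Nat.exists_eq_add_of_le hdd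
  obtain ⟨k2, rfl⟩ := Nat.exists_eq_add_of_le haa
  have h : u' + k1 = u + k2 := by omega
  calc G (d+k1) a' u' ≤ G d a' (u'+k1) := chain_d d a' hd ha' k1 u'
    _ = G d a' (u+k2) := by rw [h]
    _ ≤ G d (a'+k2) u := chain_a d a' hd ha' k2 u

lemma G_nonneg (d a u : ℕ) : 0 ≤ G d a u :=
  Real.rpow_nonneg (div_nonneg (prodR_nonneg _ _) (prodR_nonneg _ _)) _

lemma Fhat_nonneg (N d a u : ℕ) : 0 ≤ Fhat N d a u := by
  have h : (0:ℝ) ≤ (prodR a u / prodR d u) ^ ((1:ℝ)/(u+1)) :=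
    Real.rpow_nonneg (div_nonneg (prodR_nonneg _ _) (prodR_nonneg _ _)) _
  unfold Fhat
  split_ifs
  · norm_num
  · norm_num
  · norm_num
  · exact inv_nonneg.mpr (by linarith)

lemma Fhat_le_one (N d a u : ℕ) : Fhat N d a u ≤ 1 := by
  have h : (0:ℝ) ≤ (prodR a u / prodR d u) ^ ((1:ℝ)/(u+1)) :=
    Real.rpow_nonneg (div_nonneg (prodR_nonneg _ _) (prodR_nonneg _ _)) _
  unfold Fhat
  split_ifs
  · norm_num
  · norm_num
  · norm_num
  · rw [inv_le_one_iff₀]; right; linarith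

lemma Fhat_interior (N d a u : ℕ) (hd : 1 ≤ d) (ha : 1 ≤ a) (hsum : d + a + u = N) :
    Fhat N d a u = (1 + G d a u)⁻¹ := by
  unfold Fhat G
  rw [if_neg (by omega), if_neg (by omega), if_neg (by omega)]

lemma part1 (N : ℕ) : ∀ d a u d' a' u' : ℕ, d + a + u = N → d' + a' + u' = N →
    d ≤ d' → a' ≤ a → Fhat N d a u ≤ Fhat N d' a' u' := by
  intro d a u d' a' u' hs hs' hdd haa
  by_cases ha' : a' = 0
  · subst ha'
    by_cases hd' : d' = 0
    · subst hd'
      have hd : d = 0 := by omega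
      subst hd
      have hu' : u' = N := by omega
      have h2 : Fhat N 0 0 u' = 1/2 := by
        unfold Fhat; rw [if_neg (by omega), if_neg (by omega), if_pos hu']
      rw [h2]
      by_cases ha : a = 0
      · subst ha
        have hu : u = N := by omega
        have h3 : Fhat N 0 0 u = 1/2 := by
          unfold Fhat; rw [if_neg (by omega), if_neg (by omega), if_pos hu]
        rw [h3]
      · have h0 : Fhat N 0 a u = 0 := by
          unfold Fhat; rw [if_pos (by omega)]
        rw [h0]; norm_num
    · have : Fhat N d' 0 u' = 1 := by
        unfold Fhat; rw [if_neg (by omega), if_pos (by omega)]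
      rw [this]; exact Fhat_le_one N d a u
  · have ha1 : 1 ≤ a' := by omega
    by_cases hd : d = 0
    · subst hd
      have ha : 1 ≤ a := by omega
      have : Fhat N 0 a u = 0 := by
        unfold Fhat; rw [if_pos (by omega)]
      rw [this]; exact Fhat_nonneg N d' a' u'
    · have hd1 : 1 ≤ d := by omega
      rw [Fhat_interior N d a u hd1 (by omega) hs,
          Fhat_interior N d' a' u' (by omega) ha1 hs']
      have hg := G_mono d a u d' a' u' hd1 ha1 hdd haa (by omega)
      have h0 := G_nonneg d' a' u'
      rw [inv_le_inv₀ (by linarith) (by linarith)]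
      linarith

open Classical in
lemma dCount_mono {N : ℕ} (obs : Fin N → ℝ ⊕ ℝ × ℝ) {τ τ' : ℝ} (h : τ ≤ τ') :
    dCount obs τ ≤ dCount obs τ' := by
  apply Finset.card_le_card
  intro n hn
  simp only [Finset.mem_filter, Finset.mem_univ, true_and] at hn ⊢
  match hobs : obs n with
  | Sum.inl x => simp only [hobs] at hn ⊢; linarith
  | Sum.inr c => simp only [hobs] at hn ⊢; linarith

open Classical in
lemma aCount_anti {N : ℕ} (obs : Fin N → ℝ ⊕ ℝ × ℝ) {τ τ' : ℝ} (h : τ ≤ τ') :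
    aCount obs τ' ≤ aCount obs τ := by
  apply Finset.card_le_card
  intro n hn
  simp only [Finset.mem_filter, Finset.mem_univ, true_and] at hn ⊢
  match hobs : obs n with
  | Sum.inl x => simp only [hobs] at hn ⊢; linarith
  | Sum.inr c => simp only [hobs] at hn ⊢; linarith

open Classical in
lemma count_le {N : ℕ} (obs : Fin N → ℝ ⊕ ℝ × ℝ)
    (hobs : ∀ n t t₂, obs n = Sum.inr (t, t₂) → t < t₂) (τ : ℝ) :
    dCount obs τ + aCount obs τ ≤ N := by
  classical
  rw [dCount, aCount, ← Finset.card_union_of_disjoint]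
  · calc _ ≤ (Finset.univ : Finset (Fin N)).card := Finset.card_le_card (Finset.subset_univ _)
      _ = N := by simp
  · rw [Finset.disjoint_left]
    intro n hn1 hn2
    match h : obs n with
    | Sum.inl x =>
      simp only [Finset.mem_filter, h] at hn1 hn2
      linarith [hn1.2, hn2.2]
    | Sum.inr c =>
      simp only [Finset.mem_filter, h] at hn1 hn2
      have := hobs n c.1 c.2 (by rw [h])
      linarith [hn1.2, hn2.2]

theorem stmt9 (N : ℕ) (hN : 1 ≤ N) :
    (∀ d a u d' a' u' : ℕ, d + a + u = N → d' + a' + u' = N →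
        d ≤ d' → a' ≤ a → Fhat N d a u ≤ Fhat N d' a' u') ∧
    (∀ obs : Fin N → ℝ ⊕ ℝ × ℝ,
        (∀ n t t₂, obs n = Sum.inr (t, t₂) → t < t₂) →
        ∀ τ τ' : ℝ, τ ≤ τ' →
          Fhat N (dCount obs τ) (aCount obs τ) (N - dCount obs τ - aCount obs τ)
            ≤ Fhat N (dCount obs τ') (aCount obs τ') (N - dCount obs τ' - aCount obs τ')) := by
  refine ⟨part1 N, ?_⟩
  intro obs hobs τ τ' hττ
  have hd := dCount_mono obs hττ
  have ha := aCount_anti obs hττ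
  have h1 := count_le obs hobs τ
  have h2 := count_le obs hobs τ'
  exact part1 N _ _ _ _ _ _ (by omega) (by omega) hd ha
end
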